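/- arXiv:1802.09682 — 3 statements merged into one kernel-verified Lean document; each statement's English description precedes it below -/
import Mathlib

section
/- Let m > 0 be a real number and let g₁, …, g_l : ℝⁿ → ℝ be continuous functions that are positively homogeneous of degree m, i.e., g_k(tξ) = t^m g_k(ξ) for all t > 0 and all ξ ∈ ℝⁿ. Define Ω := {ξ ∈ ℝⁿ : g_k(ξ) ≤ 1 for k = 1,…,l} and g(ξ) := max{g₁(ξ), …, g_l(ξ)}. If Ω is bounded, then the Lebesgue volume of Ω satisfies Vol(Ω) = (1/Γ(1 + n/m)) · ∫_{ℝⁿ} e^{−g(ξ)} dξ, where Γ is the Gamma function; in particular the integral ∫_{ℝⁿ} e^{−g(ξ)} dξ is finite. -/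
open MeasureTheory Filter
open scoped InnerProductSpace
open scoped ENNReal Pointwise

/-- Corollary 1 (Lasserre): volume of a bounded sublevel-one set of positively homogeneous
functions of degree `m` as a Gamma-normalized exponential integral of their max. -/
theorem stmt_2 {n l : ℕ} (hl : 0 < l) (m : ℝ) (hm : 0 < m)
    (g : Fin l → EuclideanSpace ℝ (Fin n) → ℝ)
    (hgc : ∀ k, Continuous (g k))
    (hph : ∀ k, ∀ t : ℝ, 0 < t → ∀ ξ, g k (t • ξ) = t ^ m * g k ξ)
    (hbdd : Bornology.IsBounded {ξ : EuclideanSpace ℝ (Fin n) | ∀ k, g k ξ ≤ 1}) :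
    Integrable (fun ξ : EuclideanSpace ℝ (Fin n) => Real.exp (-(⨆ k, g k ξ))) ∧
    (volume {ξ : EuclideanSpace ℝ (Fin n) | ∀ k, g k ξ ≤ 1}).toReal =
      (1 / Real.Gamma (1 + n / m)) *
        ∫ ξ : EuclideanSpace ℝ (Fin n), Real.exp (-(⨆ k, g k ξ)) := by
  haveI : Nonempty (Fin l) := ⟨⟨0, hl⟩⟩
  set G : EuclideanSpace ℝ (Fin n) → ℝ := fun ξ => ⨆ k, g k ξ with hGdef
  have hGsup' : ∀ ξ, G ξ = Finset.univ.sup' Finset.univ_nonempty (fun k => g k ξ) :=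
    fun ξ => (Finset.sup'_univ_eq_ciSup _).symm
  have hGcont : Continuous G :=
    (Continuous.finset_sup'_apply Finset.univ_nonempty (fun i _ => hgc i)).congr
      (fun ξ => (hGsup' ξ).symm)
  have hle : ∀ k ξ, g k ξ ≤ G ξ := fun k ξ => by
    rw [hGsup']; exact Finset.le_sup' (fun j => g j ξ) (Finset.mem_univ k)
  have hΩ : {ξ : EuclideanSpace ℝ (Fin n) | ∀ k, g k ξ ≤ 1} = {ξ | G ξ ≤ 1} := by
    ext ξ
    simp only [Set.mem_setOf_eq, hGsup', Finset.sup'_le_iff]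
    exact ⟨fun h k _ => h k, fun h k => h k (Finset.mem_univ k)⟩
  have hGhom : ∀ t : ℝ, 0 < t → ∀ ξ, G (t • ξ) = t ^ m * G ξ := by
    intro t ht ξ
    have : G (t • ξ) = ⨆ k, t ^ m * g k ξ := by
      rw [hGdef]; exact iSup_congr fun k => hph k t ht ξ
    rw [this, hGdef, ← Real.mul_iSup_of_nonneg (Real.rpow_nonneg ht.le m)]
  have hg0 : ∀ k, g k (0 : EuclideanSpace ℝ (Fin n)) = 0 := by
    intro k
    have h := hph k 2 two_pos (0 : EuclideanSpace ℝ (Fin n))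
    rw [smul_zero] at h
    have h2 : (1:ℝ) < 2 ^ m :=
      (Real.one_lt_rpow_iff_of_pos (by norm_num)).mpr (Or.inl ⟨one_lt_two, hm⟩)
    have h3 : (2 ^ m - 1) * g k (0 : EuclideanSpace ℝ (Fin n)) = 0 := by linear_combination -h
    rcases mul_eq_zero.mp h3 with h4 | h4
    · linarith
    · exact h4
  have hG0 : G (0 : EuclideanSpace ℝ (Fin n)) = 0 := by
    rw [hGsup']; simp only [hg0]
    exact Finset.sup'_const Finset.univ_nonempty (0:ℝ)
  have hGnn : ∀ ξ, 0 ≤ G ξ := by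
    intro ξ
    by_contra hneg
    push_neg at hneg
    have hξ0 : ξ ≠ 0 := by rintro rfl; rw [hG0] at hneg; exact lt_irrefl 0 hneg
    obtain ⟨R, hR⟩ := hbdd.subset_closedBall 0
    have hnξ : 0 < ‖ξ‖ := norm_pos_iff.mpr hξ0
    set t := (max R 0 + 1) / ‖ξ‖ with htdef
    have ht : 0 < t := by positivity
    have hmem : t • ξ ∈ {ξ : EuclideanSpace ℝ (Fin n) | ∀ k, g k ξ ≤ 1} := by
      intro k
      have h1 : g k ξ ≤ G ξ := hle k ξ
      have h2 : 0 < t ^ m := Real.rpow_pos_of_pos ht m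
      have := hph k t ht ξ
      nlinarith
    have hball := hR hmem
    rw [Metric.mem_closedBall, dist_zero_right, norm_smul, Real.norm_eq_abs,
      abs_of_pos ht, htdef, div_mul_cancel₀ _ hnξ.ne'] at hball
    have : R ≤ max R 0 := le_max_left R 0
    linarith
  -- scaling of strict sublevel sets
  have hmeasG : Measurable G := hGcont.measurable
  have hscale : ∀ s : ℝ, 0 < s →
      {ξ : EuclideanSpace ℝ (Fin n) | G ξ < s} = (s ^ (1/m)) • {ξ | G ξ < 1} := by
    intro s hs
    have hc : 0 < s ^ (1/m) := Real.rpow_pos_of_pos hs _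
    ext ξ
    rw [Set.mem_smul_set_iff_inv_smul_mem₀ hc.ne']
    have h1 : G ((s ^ (1/m))⁻¹ • ξ) = s⁻¹ * G ξ := by
      rw [hGhom _ (inv_pos.mpr hc) ξ, Real.inv_rpow (Real.rpow_nonneg hs.le _),
        ← Real.rpow_mul hs.le, one_div_mul_cancel hm.ne', Real.rpow_one]
    simp only [Set.mem_setOf_eq, h1]
    rw [inv_mul_lt_iff₀ hs, mul_one]
  set V : ℝ≥0∞ := volume {ξ : EuclideanSpace ℝ (Fin n) | G ξ ≤ 1} with hVdef
  set V₀ : ℝ≥0∞ := volume {ξ : EuclideanSpace ℝ (Fin n) | G ξ < 1} with hV₀def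
  have hvol : ∀ s : ℝ, 0 < s →
      volume {ξ : EuclideanSpace ℝ (Fin n) | G ξ < s} =
        ENNReal.ofReal (s ^ ((n:ℝ)/m)) * V₀ := by
    intro s hs
    rw [hscale s hs, MeasureTheory.Measure.addHaar_smul, finrank_euclideanSpace_fin,
      abs_of_nonneg (pow_nonneg (Real.rpow_nonneg hs.le _) _), ← Real.rpow_natCast (s ^ (1/m)) n,
      ← Real.rpow_mul hs.le]
    congr 2
    field_simp
  have hVfin : V < ⊤ := by
    obtain ⟨R, hR⟩ := hbdd.subset_closedBall 0
    rw [hΩ] at hR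
    exact lt_of_le_of_lt (measure_mono hR) (measure_closedBall_lt_top)
  have hV₀V : V₀ ≤ V := measure_mono (Set.setOf_subset_setOf.mpr fun ξ h => le_of_lt h)
  have hVeq : V₀ = V := by
    refine le_antisymm hV₀V ?_
    have hev : ∀ᶠ s : ℝ in nhdsWithin 1 (Set.Ioi 1),
        V ≤ ENNReal.ofReal (s ^ ((n:ℝ)/m)) * V₀ := by
      filter_upwards [self_mem_nhdsWithin] with s hs
      rw [← hvol s (lt_trans one_pos hs)]
      exact measure_mono (Set.setOf_subset_setOf.mpr fun ξ h => lt_of_le_of_lt h hs)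
    have hcont : Tendsto (fun s : ℝ => ENNReal.ofReal (s ^ ((n:ℝ)/m)) * V₀)
        (nhdsWithin 1 (Set.Ioi 1)) (nhds V₀) := by
      have h1 : Tendsto (fun s : ℝ => s ^ ((n:ℝ)/m)) (nhdsWithin 1 (Set.Ioi 1))
          (nhds 1) := by
        have := (Real.continuousAt_rpow_const 1 ((n:ℝ)/m) (Or.inl one_ne_zero))
        have h2 := this.continuousWithinAt (s := Set.Ioi 1)
        have h4 : Tendsto (fun s : ℝ => s ^ ((n:ℝ)/m)) (nhdsWithin 1 (Set.Ioi 1))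
            (nhds ((1:ℝ) ^ ((n:ℝ)/m))) := h2
        simpa [Real.one_rpow] using h4
      have h3 : Tendsto (fun s : ℝ => ENNReal.ofReal (s ^ ((n:ℝ)/m)))
          (nhdsWithin 1 (Set.Ioi 1)) (nhds 1) := by
        simpa [Function.comp_def] using (ENNReal.continuous_ofReal.tendsto 1).comp h1
      simpa using ENNReal.Tendsto.mul_const h3 (Or.inl one_ne_zero)
    exact ge_of_tendsto hcont hev
  have hexp_meas : Measurable fun ξ : EuclideanSpace ℝ (Fin n) => Real.exp (-(G ξ)) :=
    (Real.continuous_exp.comp hGcont.neg).measurable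
  have hkey : (∫⁻ ξ : EuclideanSpace ℝ (Fin n), ENNReal.ofReal (Real.exp (-(G ξ)))) =
      ENNReal.ofReal (Real.Gamma ((n:ℝ)/m + 1)) * V₀ := by
    rw [lintegral_eq_lintegral_meas_lt volume
      (Filter.Eventually.of_forall fun ξ => (Real.exp_pos _).le) hexp_meas.aemeasurable]
    have hset : ∀ t : ℝ, 0 < t → {a : EuclideanSpace ℝ (Fin n) | t < Real.exp (-(G a))} =
        {a | G a < -Real.log t} := by
      intro t ht; ext a
      rw [Set.mem_setOf_eq, Set.mem_setOf_eq, ← Real.log_lt_iff_lt_exp ht, lt_neg]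
    have h1 : (∫⁻ t in Set.Ioi (0:ℝ), volume {a | t < Real.exp (-(G a))}) =
        ∫⁻ t in Set.Ioi (0:ℝ), volume {a : EuclideanSpace ℝ (Fin n) | G a < -Real.log t} :=
      setLIntegral_congr_fun measurableSet_Ioi (fun t ht => by
        rw [hset t ht])
    rw [h1]
    have hsplit : Set.Ioo (0:ℝ) 1 ∪ Set.Ici 1 = Set.Ioi 0 := Set.Ioo_union_Ici_eq_Ioi one_pos
    rw [← hsplit, lintegral_union measurableSet_Ici ((Set.Iio_disjoint_Ici le_rfl).mono_left Set.Ioo_subset_Iio_self)]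
    have h2 : (∫⁻ t in Set.Ici (1:ℝ),
        volume {a : EuclideanSpace ℝ (Fin n) | G a < -Real.log t}) = 0 := by
      have hz : ∀ t ∈ Set.Ici (1:ℝ),
          volume {a : EuclideanSpace ℝ (Fin n) | G a < -Real.log t} = (0:ℝ≥0∞) := by
        intro t ht
        have hlog : 0 ≤ Real.log t := Real.log_nonneg ht
        have he : {a : EuclideanSpace ℝ (Fin n) | G a < -Real.log t} = ∅ := by
          ext a
          simp only [Set.mem_setOf_eq, Set.mem_empty_iff_false, iff_false, not_lt]
          linarith [hGnn a]
        rw [he, measure_empty]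
      calc (∫⁻ t in Set.Ici (1:ℝ),
            volume {a : EuclideanSpace ℝ (Fin n) | G a < -Real.log t})
          = ∫⁻ _ in Set.Ici (1:ℝ), (0:ℝ≥0∞) :=
            setLIntegral_congr_fun measurableSet_Ici hz
        _ = 0 := lintegral_zero
    rw [h2, add_zero]
    have h3 : (∫⁻ t in Set.Ioo (0:ℝ) 1,
        volume {a : EuclideanSpace ℝ (Fin n) | G a < -Real.log t}) =
        ∫⁻ t in Set.Ioo (0:ℝ) 1, ENNReal.ofReal ((-Real.log t) ^ ((n:ℝ)/m)) * V₀ :=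
      setLIntegral_congr_fun measurableSet_Ioo (fun t ht => by
        have hlt : Real.log t < 0 := Real.log_neg ht.1 ht.2
        rw [hvol _ (by linarith)])
    rw [h3]
    have himg : (fun s : ℝ => Real.exp (-s)) '' Set.Ioi 0 = Set.Ioo 0 1 := by
      ext t
      constructor
      · rintro ⟨s, hs, rfl⟩
        refine ⟨Real.exp_pos _, ?_⟩
        rw [← Real.exp_zero]
        exact Real.exp_lt_exp.mpr (by simpa using hs)
      · rintro ⟨ht0, ht1⟩
        refine ⟨-Real.log t, ?_, show Real.exp (-(-Real.log t)) = t by rw [neg_neg, Real.exp_log ht0]⟩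
        have := Real.log_neg ht0 ht1
        simp only [Set.mem_Ioi]
        linarith
    have hder : ∀ s ∈ Set.Ioi (0:ℝ), HasFDerivWithinAt (fun s : ℝ => Real.exp (-s))
        ((1 : ℝ →L[ℝ] ℝ).smulRight (-Real.exp (-s))) (Set.Ioi 0) s := by
      intro s _
      have h : HasDerivAt (fun s : ℝ => Real.exp (-s)) (-Real.exp (-s)) s := by
        simpa [Function.comp_def] using (Real.hasDerivAt_exp (-s)).comp s (hasDerivAt_neg s)
      exact h.hasDerivWithinAt.hasFDerivWithinAt
    have hinj : Set.InjOn (fun s : ℝ => Real.exp (-s)) (Set.Ioi 0) := fun a _ b _ h =>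
      neg_injective (Real.exp_injective h)
    rw [← himg, MeasureTheory.lintegral_image_eq_lintegral_abs_det_fderiv_mul volume
      measurableSet_Ioi hder hinj]
    have h4 : ∀ s ∈ Set.Ioi (0:ℝ),
        ENNReal.ofReal |(((1 : ℝ →L[ℝ] ℝ).smulRight (-Real.exp (-s))).det)| *
          (ENNReal.ofReal ((-Real.log (Real.exp (-s))) ^ ((n:ℝ)/m)) * V₀) =
        ENNReal.ofReal (Real.exp (-s) * s ^ ((n:ℝ)/m)) * V₀ := by
      intro s _
      rw [ContinuousLinearMap.smulRight_one_eq_toSpanSingleton, ContinuousLinearMap.det_toSpanSingleton, abs_neg, abs_of_pos (Real.exp_pos _),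
        Real.log_exp, neg_neg, ← mul_assoc, ← ENNReal.ofReal_mul (Real.exp_pos _).le]
    have h5 : (∫⁻ s in Set.Ioi (0:ℝ),
        ENNReal.ofReal |(((1 : ℝ →L[ℝ] ℝ).smulRight (-Real.exp (-s))).det)| *
          (ENNReal.ofReal ((-Real.log (Real.exp (-s))) ^ ((n:ℝ)/m)) * V₀)) =
        ∫⁻ s in Set.Ioi (0:ℝ), ENNReal.ofReal (Real.exp (-s) * s ^ ((n:ℝ)/m)) * V₀ :=
      setLIntegral_congr_fun measurableSet_Ioi h4
    rw [h5, lintegral_mul_const' V₀ _ (ne_top_of_le_ne_top hVfin.ne hV₀V)]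
    congr 1
    have hint : IntegrableOn (fun s : ℝ => Real.exp (-s) * s ^ ((n:ℝ)/m)) (Set.Ioi 0) := by
      have := Real.GammaIntegral_convergent (show (0:ℝ) < (n:ℝ)/m + 1 by positivity)
      simpa using this
    have hnn : 0 ≤ᵐ[volume.restrict (Set.Ioi (0:ℝ))]
        fun s : ℝ => Real.exp (-s) * s ^ ((n:ℝ)/m) :=
      (ae_restrict_iff' measurableSet_Ioi).mpr (Filter.Eventually.of_forall fun x hx => by
        have hx' : (0:ℝ) < x := hx
        positivity)
    rw [← MeasureTheory.ofReal_integral_eq_lintegral_ofReal hint hnn]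
    congr 1
    rw [Real.Gamma_eq_integral (show (0:ℝ) < (n:ℝ)/m + 1 by positivity)]
    simp
  constructor
  · refine ⟨(Real.continuous_exp.comp hGcont.neg).aestronglyMeasurable, ?_⟩
    rw [hasFiniteIntegral_iff_ofReal (Filter.Eventually.of_forall fun ξ => (Real.exp_pos _).le)]
    show (∫⁻ ξ : EuclideanSpace ℝ (Fin n), ENNReal.ofReal (Real.exp (-(G ξ)))) < ⊤
    rw [hkey]
    exact ENNReal.mul_lt_top ENNReal.ofReal_lt_top (lt_of_le_of_lt hV₀V hVfin)
  · rw [hΩ]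
    rw [integral_eq_lintegral_of_nonneg_ae (f := fun ξ => Real.exp (-(⨆ k, g k ξ)))
      (Filter.Eventually.of_forall fun ξ => (Real.exp_pos _).le)
      (Real.continuous_exp.comp hGcont.neg).aestronglyMeasurable]
    have hkey' : (∫⁻ ξ : EuclideanSpace ℝ (Fin n),
        ENNReal.ofReal (Real.exp (-(⨆ k, g k ξ)))) =
        ENNReal.ofReal (Real.Gamma ((n:ℝ)/m + 1)) * V := by
      rw [← hVeq]; exact hkey
    rw [hkey']
    have hΓ : 0 < Real.Gamma ((n:ℝ)/m + 1) := Real.Gamma_pos_of_pos (by positivity)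
    rw [ENNReal.toReal_mul, ENNReal.toReal_ofReal hΓ.le,
      show (1:ℝ) + (n:ℝ)/m = (n:ℝ)/m + 1 by ring, ← mul_assoc,
      one_div_mul_cancel hΓ.ne', one_mul]
end

section
/- Let K ⊆ ℝⁿ be a compact, convex, symmetric (K = −K) set with 0 in its interior, let x ∈ ℝⁿ, and let m > 0 be a real number. Then the Lebesgue volume of the set {ξ ∈ K : |⟨ξ, x⟩| ≤ 1} equals (1/Γ(1 + n/m)) · ∫_{ℝⁿ} exp(−max(|⟨ξ, x⟩|^m, gauge(K, ξ)^m)) dξ, where Γ is the Gamma function. -/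
open MeasureTheory Filter
open scoped InnerProductSpace

/-- Key identity in Theorem 1: volume of `{ξ ∈ K : |⟨ξ,x⟩| ≤ 1}` as a Gamma-normalized
exponential integral of `max(|⟨ξ,x⟩|^m, gauge(K,ξ)^m)`. -/
theorem stmt_3 {n : ℕ} (K : Set (EuclideanSpace ℝ (Fin n)))
    (hKcomp : IsCompact K) (hKconv : Convex ℝ K) (hKsym : K = -K)
    (hK0 : 0 ∈ interior K) (x : EuclideanSpace ℝ (Fin n)) (m : ℝ) (hm : 0 < m) :
    (volume {ξ ∈ K | |⟪ξ, x⟫_ℝ| ≤ 1}).toReal =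
      (1 / Real.Gamma (1 + n / m)) *
        ∫ ξ : EuclideanSpace ℝ (Fin n),
          Real.exp (-(max (|⟪ξ, x⟫_ℝ| ^ m) (gauge K ξ ^ m))) := by
  set g : (EuclideanSpace ℝ (Fin n)) → ℝ := fun ξ => max |⟪ξ, x⟫_ℝ| (gauge K ξ) with hgdef
  have hKnhds : K ∈ nhds (0 : (EuclideanSpace ℝ (Fin n))) := mem_interior_iff_mem_nhds.mp hK0
  have habs : Absorbent ℝ K := absorbent_nhds_zero hKnhds
  have hsymm : ∀ y ∈ K, -y ∈ K := fun y hy => by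
    rw [hKsym]; exact Set.neg_mem_neg.mpr hy
  have hbdd : Bornology.IsVonNBounded ℝ K :=
    (NormedSpace.isVonNBounded_iff ℝ).mpr hKcomp.isBounded
  have h1 : g 0 = 0 := by simp [hgdef, gauge_zero]
  have h2 : ∀ ξ : (EuclideanSpace ℝ (Fin n)), g (-ξ) = g ξ := fun ξ => by
    simp [hgdef, inner_neg_left, abs_neg, gauge_neg hsymm]
  have h3 : ∀ ξ η : (EuclideanSpace ℝ (Fin n)), g (ξ + η) ≤ g ξ + g η := fun ξ η => by
    refine max_le ?_ ?_
    · calc |⟪ξ + η, x⟫_ℝ| = |⟪ξ, x⟫_ℝ + ⟪η, x⟫_ℝ| := by rw [inner_add_left]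
        _ ≤ |⟪ξ, x⟫_ℝ| + |⟪η, x⟫_ℝ| := abs_add_le _ _
        _ ≤ g ξ + g η := add_le_add (le_max_left _ _) (le_max_left _ _)
    · calc gauge K (ξ + η) ≤ gauge K ξ + gauge K η := gauge_add_le hKconv habs _ _
        _ ≤ g ξ + g η := add_le_add (le_max_right _ _) (le_max_right _ _)
  have h4 : ∀ {ξ : (EuclideanSpace ℝ (Fin n))}, g ξ = 0 → ξ = 0 := by
    intro ξ hξ
    have hga : gauge K ξ = 0 :=
      le_antisymm (hξ ▸ le_max_right _ _) (gauge_nonneg _)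
    exact (gauge_eq_zero habs hbdd).mp hga
  have hgsmul : ∀ (r : ℝ) (ξ : (EuclideanSpace ℝ (Fin n))), gauge K (r • ξ) = |r| * gauge K ξ := by
    intro r ξ
    rcases le_or_gt 0 r with h | h
    · rw [gauge_smul_of_nonneg h, smul_eq_mul, abs_of_nonneg h]
    · have : r • ξ = -((-r) • ξ) := by simp
      rw [this, gauge_neg hsymm, gauge_smul_of_nonneg (by linarith : (0:ℝ) ≤ -r),
        smul_eq_mul, abs_of_neg h]
  have h5 : ∀ (r : ℝ) (ξ : (EuclideanSpace ℝ (Fin n))), g (r • ξ) ≤ |r| * g ξ := by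
    intro r ξ
    refine max_le ?_ ?_
    · rw [real_inner_smul_left, abs_mul]
      exact mul_le_mul_of_nonneg_left (le_max_left _ _) (abs_nonneg r)
    · rw [hgsmul]
      exact mul_le_mul_of_nonneg_left (le_max_right _ _) (abs_nonneg r)
  have hmem : ∀ ξ : (EuclideanSpace ℝ (Fin n)), ξ ∈ K ↔ gauge K ξ ≤ 1 := fun ξ =>
    ⟨gauge_le_one_of_mem, fun h => by
      have := (gauge_le_one_iff_mem_closure hKconv hKnhds).mp h
      rwa [hKcomp.isClosed.closure_eq] at this⟩
  have hset : {ξ ∈ K | |⟪ξ, x⟫_ℝ| ≤ 1} = {ξ : (EuclideanSpace ℝ (Fin n)) | g ξ ≤ 1} := by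
    ext ξ
    simp only [Set.mem_setOf_eq, Set.mem_sep_iff, hgdef, max_le_iff, hmem ξ]
    tauto
  have hpow : ∀ ξ : (EuclideanSpace ℝ (Fin n)), g ξ ^ m = max (|⟪ξ, x⟫_ℝ| ^ m) (gauge K ξ ^ m) := by
    intro ξ
    rcases le_total |⟪ξ, x⟫_ℝ| (gauge K ξ) with h | h
    · rw [hgdef]
      simp only
      rw [max_eq_right h, max_eq_right (Real.rpow_le_rpow (abs_nonneg _) h hm.le)]
    · rw [hgdef]
      simp only
      rw [max_eq_left h, max_eq_left (Real.rpow_le_rpow (gauge_nonneg _) h hm.le)]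
  rcases Nat.eq_zero_or_pos n with hn | hn
  · -- degenerate case: the space is a single point
    subst hn
    haveI : Subsingleton (EuclideanSpace ℝ (Fin 0)) := by
      constructor; intro a b; ext i; exact absurd i.2 (by omega)
    haveI : Finite (EuclideanSpace ℝ (Fin 0)) := Finite.of_subsingleton
    haveI : IsFiniteMeasure (volume : Measure (EuclideanSpace ℝ (Fin 0))) :=
      ⟨Set.finite_univ.isCompact.measure_lt_top⟩
    have hsetu : {ξ ∈ K | |⟪ξ, x⟫_ℝ| ≤ 1} = Set.univ := by
      ext ξ
      have hξ0 : ξ = 0 := Subsingleton.elim _ _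
      subst hξ0
      simp [interior_subset hK0]
    have hfun : ∀ ξ : (EuclideanSpace ℝ (Fin 0)), Real.exp (-(max (|⟪ξ, x⟫_ℝ| ^ m) (gauge K ξ ^ m))) = 1 := by
      intro ξ
      have hξ0 : ξ = 0 := Subsingleton.elim _ _
      subst hξ0
      simp [gauge_zero, Real.zero_rpow hm.ne']
    rw [hsetu]
    simp only [hfun]
    rw [integral_const]
    norm_num [Real.Gamma_one]
    rfl
  · haveI : Nontrivial (EuclideanSpace ℝ (Fin n)) := by
      have : 0 < Module.finrank ℝ (EuclideanSpace ℝ (Fin n)) := by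
        rw [finrank_euclideanSpace, Fintype.card_fin]; exact hn
      exact Module.nontrivial_of_finrank_pos this
    rw [hset, MeasureTheory.measure_le_eq_lt volume h1 h2 h3 h4 h5 1,
      MeasureTheory.measure_lt_one_eq_integral_div_gamma volume h1 h2 h3 h4 h5 hm]
    rw [ENNReal.toReal_ofReal]
    · have hrank : (Module.finrank ℝ (EuclideanSpace ℝ (Fin n)) : ℝ) = (n : ℝ) := by
        rw [finrank_euclideanSpace, Fintype.card_fin]
      rw [hrank]
      simp_rw [hpow]
      rw [add_comm (1 : ℝ) ((n : ℝ) / m), mul_comm, mul_one_div]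
    · apply div_nonneg
      · exact integral_nonneg fun ξ => (Real.exp_pos _).le
      · exact (Real.Gamma_pos_of_pos (by positivity)).le
end

section
/- Let K ⊆ ℝⁿ be a compact, convex, symmetric (K = −K) set with 0 in its interior, let m > 0 be a real number, and define f(x) := Vol({ξ ∈ K : |⟨ξ, x⟩| ≤ 1}) / Vol(K) for x ∈ ℝⁿ. Define F(x, ξ) := (2π)^{n/2} · exp(‖ξ‖²/2 − max(|⟨ξ, x⟩|^m, gauge(K, ξ)^m)) and the standard Gaussian density p(ξ) := (2π)^{−n/2} e^{−‖ξ‖²/2}. Then for every x ∈ ℝⁿ, f(x) = C · ∫_{ℝⁿ} F(x, ξ) p(ξ) dξ, where C = 1/(Vol(K) · Γ(1 + n/m)). -/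
/-!
For a closed, bounded, balanced convex neighbourhood `K` of `0`, the function
`ξ ↦ max (gauge K ξ) |⟪ξ, x⟫|` is a norm whose closed unit ball is `{ξ ∈ K | |⟪ξ, x⟫| ≤ 1}`.
By the layer-cake formula, the unit ball of any norm `q` on an `n`-dimensional space has volume
`∫ exp (-q ξ ^ m) dξ / Γ(n / m + 1)`. In `F(x, ξ) p(ξ)` the Gaussian factors cancel, leaving
exactly `exp (-q ξ ^ m)`.
-/

open MeasureTheory Module
open scoped InnerProductSpace Topology

theorem Seminorm.measure_le_one_eq_integral_div_gamma {E : Type*} [AddCommGroup E] [Module ℝ E]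
    [FiniteDimensional ℝ E] [MeasurableSpace E] [TopologicalSpace E] [IsTopologicalAddGroup E]
    [BorelSpace E] [T2Space E] [ContinuousSMul ℝ E] (μ : Measure E) [μ.IsAddHaarMeasure]
    (q : Seminorm ℝ E) (hq : ∀ {x}, q x = 0 → x = 0) {p : ℝ} (hp : 0 < p) :
    μ {x | q x ≤ 1} =
      .ofReal ((∫ x, Real.exp (-(q x) ^ p) ∂μ) / Real.Gamma (finrank ℝ E / p + 1)) := by
  have hsmul (r : ℝ) (x : E) : q (r • x) ≤ |r| * q x := (map_smul_eq_mul q r x).le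
  rw [← measure_lt_one_eq_integral_div_gamma μ (map_zero q) (map_neg_eq_map q) (map_add_le_add q)
    hq hsmul hp]
  obtain hE | hE := subsingleton_or_nontrivial E
  · congr 1
    ext x
    simp [Subsingleton.elim x 0]
  · exact measure_le_eq_lt μ (map_zero q) (map_neg_eq_map q) (map_add_le_add q) hq hsmul 1

theorem measure_sep_abs_inner_le_one_eq_integral_div_gamma {E : Type*} [NormedAddCommGroup E]
    [InnerProductSpace ℝ E] [FiniteDimensional ℝ E] [MeasurableSpace E] [BorelSpace E]
    (μ : Measure E) [μ.IsAddHaarMeasure] {K : Set E} (hKclosed : IsClosed K)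
    (hKbdd : Bornology.IsBounded K) (hKconv : Convex ℝ K) (hKbal : Balanced ℝ K)
    (hK0 : K ∈ 𝓝 0) (x : E) {m : ℝ} (hm : 0 < m) :
    μ {ξ ∈ K | |⟪ξ, x⟫_ℝ| ≤ 1} =
      .ofReal ((∫ ξ, Real.exp (-(max (gauge K ξ) |⟪ξ, x⟫_ℝ|) ^ m) ∂μ) /
        Real.Gamma (finrank ℝ E / m + 1)) := by
  have hKabs : Absorbent ℝ K := absorbent_nhds_zero hK0
  let q : Seminorm ℝ E := gaugeSeminorm hKbal hKconv hKabs ⊔ ((innerₗ E).flip x).toSeminorm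
  have hq (ξ : E) : q ξ = max (gauge K ξ) |⟪ξ, x⟫_ℝ| := rfl
  have hq_eq_zero {ξ : E} (hξ : q ξ = 0) : ξ = 0 := by
    refine (gauge_eq_zero hKabs (NormedSpace.isVonNBounded_of_isBounded ℝ hKbdd)).mp ?_
    exact le_antisymm (hξ ▸ le_max_left _ _) (gauge_nonneg ξ)
  have hset : {ξ ∈ K | |⟪ξ, x⟫_ℝ| ≤ 1} = {ξ | q ξ ≤ 1} := by
    ext ξ
    change ξ ∈ K ∧ _ ↔ q ξ ≤ 1
    rw [hq, max_le_iff, gauge_le_one_iff_mem_closure hKconv hK0, hKclosed.closure_eq]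
  simpa only [hset, hq] using q.measure_le_one_eq_integral_div_gamma μ hq_eq_zero hm

/-- Theorem 1: the uniform probability `f(x) = Vol({ξ ∈ K : |⟨ξ,x⟩| ≤ 1})/Vol(K)` equals
`C` times the standard-Gaussian expectation of `F(x,·)`. -/
theorem stmt_4 {n : ℕ} (K : Set (EuclideanSpace ℝ (Fin n)))
    (hKcomp : IsCompact K) (hKconv : Convex ℝ K) (hKsym : K = -K)
    (hK0 : 0 ∈ interior K) (m : ℝ) (hm : 0 < m)
    (x : EuclideanSpace ℝ (Fin n)) :
    (volume {ξ ∈ K | |⟪ξ, x⟫_ℝ| ≤ 1}).toReal / (volume K).toReal =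
      (1 / ((volume K).toReal * Real.Gamma (1 + n / m))) *
        ∫ ξ : EuclideanSpace ℝ (Fin n),
          ((2 * Real.pi) ^ ((n : ℝ) / 2) *
              Real.exp (‖ξ‖ ^ 2 / 2 - max (|⟪ξ, x⟫_ℝ| ^ m) (gauge K ξ ^ m))) *
            ((2 * Real.pi) ^ (-(n : ℝ) / 2) * Real.exp (-‖ξ‖ ^ 2 / 2)) := by
  have hKbal : Balanced ℝ K :=
    (balanced_iff_neg_mem hKconv).2 fun ξ hξ => hKsym ▸ Set.neg_mem_neg.2 hξ
  have hintegrand (ξ : EuclideanSpace ℝ (Fin n)) :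
      (2 * Real.pi) ^ ((n : ℝ) / 2) *
          Real.exp (‖ξ‖ ^ 2 / 2 - max (|⟪ξ, x⟫_ℝ| ^ m) (gauge K ξ ^ m)) *
        ((2 * Real.pi) ^ (-(n : ℝ) / 2) * Real.exp (-‖ξ‖ ^ 2 / 2)) =
      Real.exp (-(max (gauge K ξ) |⟪ξ, x⟫_ℝ|) ^ m) := by
    rw [Real.rpow_max (gauge_nonneg ξ) (abs_nonneg _) hm.le, max_comm, mul_mul_mul_comm,
      ← Real.rpow_add (by positivity), neg_div, add_neg_cancel, Real.rpow_zero, one_mul,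
      ← Real.exp_add]
    ring_nf
  simp only [hintegrand]
  rw [measure_sep_abs_inner_le_one_eq_integral_div_gamma volume hKcomp.isClosed hKcomp.isBounded
    hKconv hKbal (mem_interior_iff_mem_nhds.mp hK0) x hm, finrank_euclideanSpace_fin,
    ENNReal.toReal_ofReal (by positivity), add_comm _ 1]
  ring
end
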